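/- arXiv:2407.01879 — 2 statements merged into one kernel-verified Lean document; each statement's English description precedes it below -/
import Mathlib

section
/- For ℓ ∈ ℕ and z ∈ ℝ define the truncation T_ℓ(z) := max(min(z,ℓ), −ℓ). Then for all z₁, z₂ ∈ ℝ: (i) if z₁ + z₂ ≥ 0, the sequence ℓ ↦ T_ℓ(z₁) + T_ℓ(z₂) is nonnegative, nondecreasing in ℓ, and converges to z₁ + z₂ as ℓ → ∞; (ii) if z₁ + z₂ ≤ c for some c ≥ 0, then T_ℓ(z₁) + T_ℓ(z₂) ≤ c for every ℓ. -/
open Filter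

/-- The truncation `T_ℓ(z) = max(min(z, ℓ), −ℓ)`. -/
def trunc (ℓ : ℕ) (z : ℝ) : ℝ := max (min z (ℓ : ℝ)) (-(ℓ : ℝ))

lemma trunc_eq_of_abs_le {ℓ : ℕ} {z : ℝ} (h : |z| ≤ ℓ) : trunc ℓ z = z := by
  rw [abs_le] at h
  unfold trunc
  rw [min_eq_left h.2, max_eq_left h.1]

lemma trunc_nonneg_add {ℓ : ℕ} {a b : ℝ} (h : 0 ≤ a + b) :
    0 ≤ trunc ℓ a + trunc ℓ b := by
  unfold trunc
  have hℓ : (0:ℝ) ≤ ℓ := Nat.cast_nonneg ℓ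
  rcases min_cases a (ℓ:ℝ) with ⟨e1, f1⟩ | ⟨e1, f1⟩ <;>
    rcases min_cases b (ℓ:ℝ) with ⟨e2, f2⟩ | ⟨e2, f2⟩ <;>
    rcases max_cases (min a (ℓ:ℝ)) (-(ℓ:ℝ)) with ⟨g1, k1⟩ | ⟨g1, k1⟩ <;>
    rcases max_cases (min b (ℓ:ℝ)) (-(ℓ:ℝ)) with ⟨g2, k2⟩ | ⟨g2, k2⟩ <;>
    rw [g1, g2] <;> rw [e1] at * <;> rw [e2] at * <;> linarith

lemma trunc_eq_posneg (ℓ : ℕ) (z : ℝ) :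
    trunc ℓ z = min (max z 0) ℓ - min (max (-z) 0) ℓ := by
  have hℓ : (0:ℝ) ≤ ℓ := Nat.cast_nonneg ℓ
  unfold trunc
  rcases le_total z 0 with hz | hz
  · rw [max_eq_right hz, max_eq_left (by linarith : (0:ℝ) ≤ -z),
      min_eq_left (hz.trans hℓ), min_eq_left hℓ]
    rcases le_total (-z) (ℓ:ℝ) with h | h
    · rw [min_eq_left h, max_eq_left (by linarith)]; ring
    · rw [min_eq_right h, max_eq_right (by linarith)]; ring
  · rw [max_eq_left hz, max_eq_right (by linarith : -z ≤ 0), min_eq_left hℓ,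
      max_eq_left (le_trans (by linarith) (le_min hz hℓ))]
    ring

lemma min_sub_min_mono {L L' : ℝ} (h : L ≤ L') :
    Monotone fun a => min a L' - min a L := by
  intro a b hab
  dsimp only
  rcases min_cases a L with ⟨e1, f1⟩ | ⟨e1, f1⟩ <;>
    rcases min_cases b L with ⟨e2, f2⟩ | ⟨e2, f2⟩ <;>
    rcases min_cases a L' with ⟨e3, f3⟩ | ⟨e3, f3⟩ <;>
    rcases min_cases b L' with ⟨e4, f4⟩ | ⟨e4, f4⟩ <;>
    rw [e1, e2, e3, e4] <;> linarith

lemma trunc_add_mono {a b : ℝ} (h : 0 ≤ a + b) {ℓ m : ℕ} (hlm : ℓ ≤ m) :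
    trunc ℓ a + trunc ℓ b ≤ trunc m a + trunc m b := by
  have hlm' : (ℓ:ℝ) ≤ m := Nat.cast_le.mpr hlm
  have hab : max (-a) 0 ≤ max b 0 :=
    max_le (le_trans (by linarith) (le_max_left b 0)) (le_max_right b 0)
  have hba : max (-b) 0 ≤ max a 0 :=
    max_le (le_trans (by linarith) (le_max_left a 0)) (le_max_right a 0)
  have h1 := min_sub_min_mono hlm' hab
  have h2 := min_sub_min_mono hlm' hba
  dsimp only at h1 h2
  rw [trunc_eq_posneg ℓ a, trunc_eq_posneg ℓ b, trunc_eq_posneg m a, trunc_eq_posneg m b]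
  linarith

lemma trunc_add_le {a b c : ℝ} (hc : 0 ≤ c) (h : a + b ≤ c) (ℓ : ℕ) :
    trunc ℓ a + trunc ℓ b ≤ c := by
  unfold trunc
  have hℓ : (0:ℝ) ≤ ℓ := Nat.cast_nonneg ℓ
  rcases min_cases a (ℓ:ℝ) with ⟨e1, f1⟩ | ⟨e1, f1⟩ <;>
    rcases min_cases b (ℓ:ℝ) with ⟨e2, f2⟩ | ⟨e2, f2⟩ <;>
    rcases max_cases (min a (ℓ:ℝ)) (-(ℓ:ℝ)) with ⟨g1, k1⟩ | ⟨g1, k1⟩ <;>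
    rcases max_cases (min b (ℓ:ℝ)) (-(ℓ:ℝ)) with ⟨g2, k2⟩ | ⟨g2, k2⟩ <;>
    rw [g1, g2] <;> rw [e1] at * <;> rw [e2] at * <;> linarith

/-- Properties of the truncation sums: if `z₁ + z₂ ≥ 0` then `ℓ ↦ T_ℓ(z₁) + T_ℓ(z₂)` is
nonnegative, nondecreasing, and converges to `z₁ + z₂`; and if `z₁ + z₂ ≤ c` with `c ≥ 0`
then `T_ℓ(z₁) + T_ℓ(z₂) ≤ c` for all `ℓ`. -/
theorem trunc_sum_properties (z₁ z₂ : ℝ) :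
    (0 ≤ z₁ + z₂ →
      (∀ ℓ : ℕ, 0 ≤ trunc ℓ z₁ + trunc ℓ z₂) ∧
      Monotone (fun ℓ : ℕ => trunc ℓ z₁ + trunc ℓ z₂) ∧
      Tendsto (fun ℓ : ℕ => trunc ℓ z₁ + trunc ℓ z₂) atTop (nhds (z₁ + z₂))) ∧
    (∀ c : ℝ, 0 ≤ c → z₁ + z₂ ≤ c → ∀ ℓ : ℕ, trunc ℓ z₁ + trunc ℓ z₂ ≤ c) := by
  constructor
  · intro h
    refine ⟨fun ℓ => trunc_nonneg_add h, fun ℓ m hlm => trunc_add_mono h hlm, ?_⟩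
    have : ∀ᶠ ℓ : ℕ in atTop, trunc ℓ z₁ + trunc ℓ z₂ = z₁ + z₂ := by
      obtain ⟨N, hN⟩ := exists_nat_ge (max |z₁| |z₂|)
      filter_upwards [eventually_ge_atTop N] with ℓ hℓ
      have hℓ' : max |z₁| |z₂| ≤ ℓ := hN.trans (Nat.cast_le.mpr hℓ)
      rw [trunc_eq_of_abs_le ((le_max_left _ _).trans hℓ'),
        trunc_eq_of_abs_le ((le_max_right _ _).trans hℓ')]
    exact Tendsto.congr' (Filter.EventuallyEq.symm this) tendsto_const_nhds
  · exact fun c hc h ℓ => trunc_add_le hc h ℓ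
end

section
/- Let p ≥ 1, λ ∈ (0,1], R > 0, and g : ℝⁿ → ℝ ∪ {+∞} be arbitrary. Define f(s) := sup_{t ∈ ℝⁿ} ( −λ |t − s|^p − g(t) ) for s ∈ ℝⁿ. If f is real-valued and bounded on the closed ball of radius R centered at the origin, then f is Lipschitz continuous on the closed ball of radius R/2 centered at the origin. -/
/-!
`f` is the supremum of the functions `s ↦ -λ‖t - s‖^p - g t`. Let `t` attain it at `s₁` up to `ε`.
If `d = ‖t - s₁‖ > r = R/2`, then moving `s₁` a distance `r` towards `t` raises that function by
`λ (d^p - (d - r)^p) ≥ λ r d^(p-1)`, and this gain is capped by the oscillation of `f` on the big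
ball; hence `d^(p-1)` is bounded. Using the same `t` at `s₂`, convexity of `x ↦ x^p` gives
`f s₁ - f s₂ ≤ λ p (d + ‖s₁ - s₂‖)^(p-1) ‖s₁ - s₂‖ + ε`.
-/

open NNReal Metric Set

lemma rpow_sub_rpow_le_mul_sub {p a b : ℝ} (hp : 1 ≤ p) (hb : 0 ≤ b) (hba : b ≤ a) :
    a ^ p - b ^ p ≤ p * a ^ (p - 1) * (a - b) := by
  rcases hba.eq_or_lt with rfl | hlt
  · simp
  have hslope := (convexOn_rpow hp).slope_le_of_hasDerivAt hb (hb.trans hlt.le) hlt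
    (Real.hasDerivAt_rpow_const (Or.inr hp))
  rwa [slope_def_field, div_le_iff₀ (sub_pos.2 hlt)] at hslope

lemma mul_rpow_sub_one_le_rpow_sub_rpow {p d r : ℝ} (hp : 1 ≤ p) (hr : 0 ≤ r) (hrd : r ≤ d) :
    r * d ^ (p - 1) ≤ d ^ p - (d - r) ^ p := by
  have hdr : 0 ≤ d - r := sub_nonneg.2 hrd
  have hsplit : ∀ x : ℝ, 0 ≤ x → x ^ p = x * x ^ (p - 1) := fun x hx => by
    rw [← Real.rpow_one_add' hx (by linarith), add_sub_cancel]
  have hmono : (d - r) ^ (p - 1) ≤ d ^ (p - 1) :=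
    Real.rpow_le_rpow hdr (sub_le_self d hr) (sub_nonneg.2 hp)
  rw [hsplit d (hr.trans hrd), hsplit (d - r) hdr]
  nlinarith [mul_le_mul_of_nonneg_left hmono hdr]

lemma exists_dist_eq_and_dist_eq_sub {E : Type*} [NormedAddCommGroup E] [NormedSpace ℝ E]
    {s t : E} {r : ℝ} (hr : 0 ≤ r) (hrt : r ≤ dist t s) :
    ∃ s', dist s' s = r ∧ dist t s' = dist t s - r := by
  rcases (hr.trans hrt).eq_or_lt with hts | hts
  · exact ⟨s, by rw [dist_self]; linarith, by linarith⟩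
  refine ⟨AffineMap.lineMap s t (r / dist t s), ?_, ?_⟩
  · rw [dist_lineMap_left, Real.norm_of_nonneg (by positivity), dist_comm s t]
    field_simp
  · rw [dist_comm, dist_lineMap_right, Real.norm_of_nonneg, dist_comm s t]
    · field_simp
    · rwa [sub_nonneg, div_le_one hts]

lemma sub_le_of_near_optimal {α : Type*} [PseudoMetricSpace α] {f : α → ℝ} {p lam c ε : ℝ}
    {t s₁ s₂ : α} (hp : 1 ≤ p) (hlam : 0 ≤ lam)
    (hsupp : -(lam * dist t s₂ ^ p) - c ≤ f s₂)
    (hopt : f s₁ - ε ≤ -(lam * dist t s₁ ^ p) - c) :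
    f s₁ - f s₂ ≤ lam * p * (dist t s₁ + dist s₁ s₂) ^ (p - 1) * dist s₁ s₂ + ε := by
  have hgrowth := rpow_sub_rpow_le_mul_sub hp (dist_nonneg (x := t) (y := s₁))
    (le_add_of_nonneg_right (dist_nonneg (x := s₁) (y := s₂)))
  rw [add_sub_cancel_left] at hgrowth
  calc f s₁ - f s₂ ≤ lam * (dist t s₂ ^ p - dist t s₁ ^ p) + ε := by linarith
    _ ≤ lam * ((dist t s₁ + dist s₁ s₂) ^ p - dist t s₁ ^ p) + ε := by
      gcongr
      exact dist_triangle _ _ _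
    _ ≤ lam * (p * (dist t s₁ + dist s₁ s₂) ^ (p - 1) * dist s₁ s₂) + ε := by gcongr
    _ = lam * p * (dist t s₁ + dist s₁ s₂) ^ (p - 1) * dist s₁ s₂ + ε := by ring

section NearOptimal

variable {E : Type*} [NormedAddCommGroup E] [NormedSpace ℝ E] {f : E → ℝ}
  {p lam r A ε : ℝ} {s t : E}

lemma max_dist_rpow_le_of_near_optimal {c : ℝ} (hp : 1 ≤ p) (hlam : 0 < lam) (hr : 0 < r)
    (hsupp : ∀ s' ∈ closedBall s r, -(lam * dist t s' ^ p) - c ≤ f s')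
    (hosc : ∀ s' ∈ closedBall s r, f s' ≤ f s + A)
    (hopt : f s - ε ≤ -(lam * dist t s ^ p) - c) :
    max (dist t s) r ^ (p - 1) ≤ max (r ^ (p - 1)) ((A + ε) / (lam * r)) := by
  rcases le_or_gt (dist t s) r with hle | hlt
  · rw [max_eq_right hle]
    exact le_max_left _ _
  rw [max_eq_left hlt.le]
  obtain ⟨s', hs's, hts'⟩ := exists_dist_eq_and_dist_eq_sub hr.le hlt.le
  have hs' : s' ∈ closedBall s r := mem_closedBall.2 hs's.le
  have hgain : lam * (dist t s ^ p - (dist t s - r) ^ p) ≤ A + ε := by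
    have := hsupp s' hs'
    have := hosc s' hs'
    rw [hts'] at *
    linarith
  have hdrop := mul_le_mul_of_nonneg_left
    (mul_rpow_sub_one_le_rpow_sub_rpow hp hr.le hlt.le) hlam.le
  refine le_max_of_le_right ?_
  rw [le_div_iff₀ (by positivity)]
  linarith

variable {ι : Type*} {x : ι → E} {c : ι → ℝ} {a s₁ s₂ : E} {R C : ℝ}

lemma le_add_mul_dist_add_of_isLUB (hp : 1 ≤ p) (hlam : 0 < lam) (hR : 0 < R)
    (hf : ∀ s ∈ closedBall a R, IsLUB (range fun i => -(lam * dist (x i) s ^ p) - c i) (f s))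
    (hC : ∀ s ∈ closedBall a R, |f s| ≤ C)
    (hs₁ : s₁ ∈ closedBall a (R / 2)) (hs₂ : s₂ ∈ closedBall a (R / 2))
    (hε : 0 < ε) (hε₁ : ε ≤ 1) :
    f s₁ ≤ f s₂ + lam * p * (3 ^ (p - 1) *
      max ((R / 2) ^ (p - 1)) ((2 * C + 1) / (lam * (R / 2)))) * dist s₁ s₂ + ε := by
  rw [add_assoc, ← sub_le_iff_le_add']
  have hball : closedBall s₁ (R / 2) ⊆ closedBall a R :=
    closedBall_subset_closedBall' (by linarith [mem_closedBall.1 hs₁])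
  have hs₂R : s₂ ∈ closedBall a R := closedBall_subset_closedBall (by linarith) hs₂
  have hs₁R : s₁ ∈ closedBall a R := hball (mem_closedBall_self (by linarith))
  obtain ⟨_, ⟨i, rfl⟩, hopt, -⟩ := (hf s₁ hs₁R).exists_between (sub_lt_self (f s₁) hε)
  have hsupp : ∀ s ∈ closedBall a R, -(lam * dist (x i) s ^ p) - c i ≤ f s :=
    fun s hs => (hf s hs).1 ⟨i, rfl⟩
  have hosc : ∀ s ∈ closedBall s₁ (R / 2), f s ≤ f s₁ + 2 * C := fun s hs => by
    linarith [abs_le.1 (hC s (hball hs)), abs_le.1 (hC s₁ hs₁R)]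
  have hloc := max_dist_rpow_le_of_near_optimal hp hlam (half_pos hR)
    (fun s hs => hsupp s (hball hs)) hosc hopt.le
  have hreach : dist (x i) s₁ + dist s₁ s₂ ≤ 3 * max (dist (x i) s₁) (R / 2) := by
    have := dist_triangle_right s₁ s₂ a
    linarith [mem_closedBall.1 hs₁, mem_closedBall.1 hs₂, le_max_left (dist (x i) s₁) (R / 2),
      le_max_right (dist (x i) s₁) (R / 2)]
  calc f s₁ - f s₂
      ≤ lam * p * (dist (x i) s₁ + dist s₁ s₂) ^ (p - 1) * dist s₁ s₂ + ε :=
        sub_le_of_near_optimal hp hlam.le (hsupp s₂ hs₂R) hopt.le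
    _ ≤ lam * p * (3 * max (dist (x i) s₁) (R / 2)) ^ (p - 1) * dist s₁ s₂ + ε := by
        gcongr
    _ = lam * p * (3 ^ (p - 1) * max (dist (x i) s₁) (R / 2) ^ (p - 1)) * dist s₁ s₂ + ε := by
        rw [Real.mul_rpow (by norm_num) (le_max_of_le_right (by linarith))]
    _ ≤ _ := by
        gcongr
        exact hloc.trans (by gcongr)

theorem lipschitzOnWith_of_isLUB (hp : 1 ≤ p) (hlam : 0 < lam) (hR : 0 < R)
    (hf : ∀ s ∈ closedBall a R, IsLUB (range fun i => -(lam * dist (x i) s ^ p) - c i) (f s))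
    (hC : ∀ s ∈ closedBall a R, |f s| ≤ C) :
    ∃ K : ℝ≥0, LipschitzOnWith K f (closedBall a (R / 2)) :=
  ⟨_, LipschitzOnWith.of_le_add_mul' _ fun _ hs₁ _ hs₂ => le_of_forall_pos_le_add fun ε hε =>
    (le_add_mul_dist_add_of_isLUB hp hlam hR hf hC hs₁ hs₂ (lt_min hε one_pos)
      (min_le_right ε 1)).trans (add_le_add le_rfl (min_le_left ε 1))⟩

end NearOptimal

/-- Indices with `g t = ⊤` contribute `⊥` to the supremum and are dropped; `g t = ⊥` cannot occur
since the supremum is finite. -/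
lemma isLUB_toReal_of_iSup_coe_sub_eq {α : Type*} {u : α → ℝ} {g : α → EReal} {y : ℝ}
    (h : ⨆ t, (u t : EReal) - g t = y) :
    IsLUB (range fun t : {t // g t ≠ ⊤} => u t - (g t).toReal) y := by
  have hle : ∀ t, (u t : EReal) - g t ≤ y := fun t => h ▸ le_iSup (fun t => (u t : EReal) - g t) t
  have hbot : ∀ t, g t ≠ ⊥ := fun t ht => by
    have := hle t
    rw [ht, EReal.coe_sub_bot, top_le_iff] at this
    exact EReal.coe_ne_top y this
  have hcoe : ∀ t, g t ≠ ⊤ → ((u t - (g t).toReal : ℝ) : EReal) = u t - g t := fun t ht => by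
    rw [EReal.coe_sub, EReal.coe_toReal ht (hbot t)]
  refine ⟨?_, fun b hb => ?_⟩
  · rintro _ ⟨⟨t, ht⟩, rfl⟩
    exact EReal.coe_le_coe_iff.1 ((hcoe t ht).trans_le (hle t))
  · refine EReal.coe_le_coe_iff.1 (h ▸ iSup_le fun t => ?_)
    by_cases ht : g t = ⊤
    · simp [ht]
    · rw [← hcoe t ht]
      exact EReal.coe_le_coe_iff.2 (hb ⟨⟨t, ht⟩, rfl⟩)

theorem transform_locally_lipschitz_general (n : ℕ) (p lam R : ℝ)
    (hp : 1 ≤ p) (hlam₀ : 0 < lam) (hR : 0 < R)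
    (g : EuclideanSpace ℝ (Fin n) → EReal)
    (f : EuclideanSpace ℝ (Fin n) → ℝ)
    (hf : ∀ s ∈ Metric.closedBall (0 : EuclideanSpace ℝ (Fin n)) R,
      (⨆ t : EuclideanSpace ℝ (Fin n),
        (((-(lam * dist t s ^ p) : ℝ) : EReal) - g t)) = (f s : EReal))
    (hbdd : ∃ C : ℝ, ∀ s ∈ Metric.closedBall (0 : EuclideanSpace ℝ (Fin n)) R, |f s| ≤ C) :
    ∃ K : ℝ≥0, LipschitzOnWith K f
      (Metric.closedBall (0 : EuclideanSpace ℝ (Fin n)) (R / 2)) := by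
  obtain ⟨C, hC⟩ := hbdd
  exact lipschitzOnWith_of_isLUB (x := Subtype.val) (c := fun t : {t // g t ≠ ⊤} => (g t).toReal)
    hp hlam₀ hR (fun s hs => isLUB_toReal_of_iSup_coe_sub_eq (hf s hs)) hC

/-- Local boundedness of a `λ|·|^p`-transform implies a local Lipschitz bound
(Euclidean version): if `f(s) = sup_t (−λ|t−s|^p − g(t))` (with `g` taking values in
`ℝ ∪ {+∞}`) is real-valued and bounded on the ball of radius `R`, then `f` is Lipschitz
on the ball of radius `R/2`. -/
theorem transform_locally_lipschitz (n : ℕ) (p lam R : ℝ)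
    (hp : 1 ≤ p) (hlam₀ : 0 < lam) (hlam₁ : lam ≤ 1) (hR : 0 < R)
    (g : EuclideanSpace ℝ (Fin n) → EReal) (hg : ∀ t, ⊥ < g t)
    (f : EuclideanSpace ℝ (Fin n) → ℝ)
    (hf : ∀ s ∈ Metric.closedBall (0 : EuclideanSpace ℝ (Fin n)) R,
      (⨆ t : EuclideanSpace ℝ (Fin n),
        (((-(lam * dist t s ^ p) : ℝ) : EReal) - g t)) = (f s : EReal))
    (hbdd : ∃ C : ℝ, ∀ s ∈ Metric.closedBall (0 : EuclideanSpace ℝ (Fin n)) R, |f s| ≤ C) :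
    ∃ K : ℝ≥0, LipschitzOnWith K f
      (Metric.closedBall (0 : EuclideanSpace ℝ (Fin n)) (R / 2)) :=
  transform_locally_lipschitz_general n p lam R hp hlam₀ hR g f hf hbdd
end
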